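/- The member state choice rule Ĉ_m is the unique choice rule satisfying feasibility, early filling, and respect of member state priorities: any choice rule C_m (a function from sets of contracts to subsets of those contracts at member state m) satisfying all three properties equals Ĉ_m on every input. -/

import Mathlib

/-! Follow the greedy run of `Ĉ_m`, keeping the invariant that the contracts accepted so far
lie in `C X'` and their asylum seekers outrank every asylum seeker with a still eligible
contract. Respect of priorities and early filling then force `C X'` to contain the next greedy
pick as well; once the run stops, the exhausted quota (by respect of priorities) or the lack of
eligible contracts (by feasibility) leaves nothing of `C X'` unaccepted. -/

/-- A contract at a fixed member state: `(asylum seeker, wait time)`.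
Asylum seekers are labelled by naturals; `π a` is the priority rank of `a`
(smaller rank = higher priority); wait times are naturals. -/
abbrev Ctr := ℕ × ℕ

open Classical in
/-- Pick, from a nonempty set of contracts, the lowest-wait-time contract of the
highest-priority asylum seeker (lexicographic minimum of (rank, wait, agent)). -/
noncomputable def pick (π : ℕ → ℕ) (Z : Finset Ctr) (h : Z.Nonempty) : Ctr :=
  let k := (Z.image fun x => toLex ((π x.1 : ℕ), toLex (x.2, x.1))).min'
    (h.image _)
  ((ofLex (ofLex k).2).2, (ofLex (ofLex k).2).1)

open Classical in
/-- One run of the greedy algorithm with fuel.  `excl = true` excludes all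
contracts of already accepted asylum seekers (the rule `Ĉ_m`), `excl = false`
excludes only already accepted contracts (the completion `Ĉ'_m`). -/
noncomputable def run (s : ℕ → ℕ) (q : ℕ) (r π : ℕ → ℕ) (excl : Bool)
    (X' : Finset Ctr) : ℕ → Finset Ctr → Finset Ctr
  | 0, acc => acc
  | n+1, acc =>
    let Z : Finset Ctr := X'.filter fun x =>
      (acc.filter fun y => y.2 = x.2).card < r x.2 ∧
      (excl = true → ∀ y ∈ acc, y.1 ≠ x.1) ∧
      (excl = false → x ∉ acc)
    if q ≤ acc.sum (fun x => s x.1) then acc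
    else if h : Z.Nonempty then
      run s q r π excl X' n (insert (pick π Z h) acc)
    else acc

/-- The member state choice rule `Ĉ_m`. -/
noncomputable def Chat (s : ℕ → ℕ) (q : ℕ) (r π : ℕ → ℕ)
    (X' : Finset Ctr) : Finset Ctr :=
  run s q r π true X' (X'.card + 1) ∅

/-- The completion `Ĉ'_m` of the member state choice rule. -/
noncomputable def Chat' (s : ℕ → ℕ) (q : ℕ) (r π : ℕ → ℕ)
    (X' : Finset Ctr) : Finset Ctr :=
  run s q r π false X' (X'.card + 1) ∅


open Finset

section Pick

variable (π : ℕ → ℕ) (Z : Finset Ctr) (h : Z.Nonempty)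

lemma pick_mem_and_le :
    pick π Z h ∈ Z ∧ ∀ z ∈ Z,
      toLex ((π (pick π Z h).1 : ℕ), toLex ((pick π Z h).2, (pick π Z h).1)) ≤
        toLex ((π z.1 : ℕ), toLex (z.2, z.1)) := by
  obtain ⟨x, hx, hxk⟩ := mem_image.mp (min'_mem
    (Z.image fun x => toLex ((π x.1 : ℕ), toLex (x.2, x.1))) (h.image _))
  have hpick : pick π Z h = x := by
    simp only [pick, ← hxk, ofLex_toLex]
  refine ⟨hpick ▸ hx, fun z hz => ?_⟩
  rw [hpick, hxk]
  exact min'_le _ _ (mem_image_of_mem _ hz)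

lemma pick_mem : pick π Z h ∈ Z := (pick_mem_and_le π Z h).1

variable {π Z} {z : Ctr}

lemma rank_pick_le (hz : z ∈ Z) : π (pick π Z h).1 ≤ π z.1 := by
  rcases Prod.Lex.le_iff.mp ((pick_mem_and_le π Z h).2 z hz) with hlt | ⟨heq, -⟩
  · exact hlt.le
  · exact heq.le

lemma wait_pick_le (hz : z ∈ Z) (hagent : z.1 = (pick π Z h).1) :
    (pick π Z h).2 ≤ z.2 := by
  rcases Prod.Lex.le_iff.mp ((pick_mem_and_le π Z h).2 z hz) with hlt | ⟨-, hle⟩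
  · simp [hagent] at hlt
  · rcases Prod.Lex.le_iff.mp hle with hlt | ⟨heq, -⟩
    · exact hlt.le
    · exact heq.le

end Pick

def eligible (r : ℕ → ℕ) (X' acc : Finset Ctr) : Finset Ctr :=
  X'.filter fun x =>
    (acc.filter fun y => y.2 = x.2).card < r x.2 ∧ ∀ y ∈ acc, y.1 ≠ x.1

lemma run_true_succ (s : ℕ → ℕ) (q : ℕ) (r π : ℕ → ℕ) (X' : Finset Ctr) (n : ℕ)
    (acc : Finset Ctr) :
    run s q r π true X' (n + 1) acc =
      if q ≤ acc.sum (fun x => s x.1) then acc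
      else if h : (eligible r X' acc).Nonempty then
        run s q r π true X' n (insert (pick π _ h) acc)
      else acc := by
  have hZ : (X'.filter fun x => (acc.filter fun y => y.2 = x.2).card < r x.2 ∧
      ((true : Bool) = true → ∀ y ∈ acc, y.1 ≠ x.1) ∧
      ((true : Bool) = false → x ∉ acc)) = eligible r X' acc := by
    ext x
    simp [eligible]
  rw [run, hZ]

def IsPriorityPrefix (r π : ℕ → ℕ) (X' acc : Finset Ctr) : Prop :=
  ∀ z ∈ eligible r X' acc, ∀ x ∈ acc, π x.1 < π z.1

lemma isPriorityPrefix_empty (r π : ℕ → ℕ) (X' : Finset Ctr) :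
    IsPriorityPrefix r π X' ∅ :=
  fun _ _ _ hx => absurd hx (notMem_empty _)

lemma IsPriorityPrefix.insert_pick {r π : ℕ → ℕ} {X' acc : Finset Ctr}
    (hπ : Function.Injective π) (hpre : IsPriorityPrefix r π X' acc)
    (h : (eligible r X' acc).Nonempty) :
    IsPriorityPrefix r π X' (insert (pick π _ h) acc) := by
  intro z hz x hx
  obtain ⟨hzX, hzcap, hzagent⟩ := mem_filter.mp hz
  have hz_acc : z ∈ eligible r X' acc := mem_filter.mpr
    ⟨hzX, (card_le_card (filter_subset_filter _ (subset_insert _ _))).trans_lt hzcap,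
      fun y hy => hzagent y (mem_insert_of_mem hy)⟩
  rcases mem_insert.mp hx with rfl | hx
  · exact (rank_pick_le h hz_acc).lt_of_ne
      fun hrank => hzagent _ (mem_insert_self _ _) (hπ hrank)
  · exact hpre z hz_acc x hx

structure ChoiceAxioms (s : ℕ → ℕ) (q : ℕ) (r π : ℕ → ℕ) (X' D : Finset Ctr) :
    Prop where
  subset : D ⊆ X'
  injOn_fst : Set.InjOn Prod.fst (D : Set Ctr)
  card_filter_wait_le : ∀ w : ℕ, (D.filter fun x => x.2 = w).card ≤ r w
  early_filling : ∀ x ∈ D, ∀ x' ∈ X', x'.1 = x.1 → x'.2 < x.2 → x' ∉ D →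
    ¬ (D.filter fun y => y.2 = x'.2 ∧ π y.1 < π x.1).card < r x'.2
  respects_priorities : ∀ a : ℕ, (∃ x ∈ X', x.1 = a) →
    ((∃ x ∈ D, x.1 = a) ↔
      ((D.filter fun y => π y.1 < π a).sum fun y => s y.1) < q ∧
      ∃ w : ℕ, (a, w) ∈ X' ∧ (D.filter fun y => y.2 = w ∧ π y.1 < π a).card < r w)

namespace ChoiceAxioms

variable {s : ℕ → ℕ} {q : ℕ} {r π : ℕ → ℕ} {X' D acc : Finset Ctr}

lemma mem_eligible (hD : ChoiceAxioms s q r π X' D) (hacc : acc ⊆ D) {y : Ctr}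
    (hy : y ∈ D) (hy' : y ∉ acc) : y ∈ eligible r X' acc := by
  refine mem_filter.mpr ⟨hD.subset hy, ?_, fun z hz hzy => hy' ?_⟩
  · have hss : (acc.filter fun z => z.2 = y.2) ⊂ D.filter fun z => z.2 = y.2 :=
      (ssubset_iff_of_subset (filter_subset_filter _ hacc)).mpr
        ⟨y, mem_filter.mpr ⟨hy, rfl⟩, fun hc => hy' (mem_filter.mp hc).1⟩
    exact (card_lt_card hss).trans_le (hD.card_filter_wait_le y.2)
  · rwa [← hD.injOn_fst (hacc hz) hy hzy]

lemma eq_of_not_nonempty_eligible (hD : ChoiceAxioms s q r π X' D) (hacc : acc ⊆ D)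
    (h : ¬ (eligible r X' acc).Nonempty) : acc = D :=
  hacc.antisymm fun y hy => by_contra fun hy' => h ⟨y, hD.mem_eligible hacc hy hy'⟩

lemma eq_of_quota_le (hD : ChoiceAxioms s q r π X' D) (hacc : acc ⊆ D)
    (hpre : IsPriorityPrefix r π X' acc) (hq : q ≤ acc.sum fun x => s x.1) : acc = D := by
  refine hacc.antisymm fun y hy => by_contra fun hy' => ?_
  have hlt := ((hD.respects_priorities y.1 ⟨y, hD.subset hy, rfl⟩).mp ⟨y, hy, rfl⟩).1
  have hle : (acc.sum fun x => s x.1) ≤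
      (D.filter fun z => π z.1 < π y.1).sum fun x => s x.1 :=
    sum_le_sum_of_subset fun x hx =>
      mem_filter.mpr ⟨hacc hx, hpre y (hD.mem_eligible hacc hy hy') x hx⟩
  omega

lemma filter_rank_lt_pick (hD : ChoiceAxioms s q r π X' D) (hacc : acc ⊆ D)
    (hpre : IsPriorityPrefix r π X' acc) (h : (eligible r X' acc).Nonempty) :
    D.filter (fun y => π y.1 < π (pick π _ h).1) = acc := by
  refine Subset.antisymm (fun y hy => ?_) fun x hx =>
    mem_filter.mpr ⟨hacc hx, hpre _ (pick_mem π _ h) x hx⟩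
  obtain ⟨hyD, hylt⟩ := mem_filter.mp hy
  by_contra hy'
  exact (rank_pick_le h (hD.mem_eligible hacc hyD hy')).not_gt hylt

/-- The greedy choice is accepted by `D`: otherwise respect of priorities gives its asylum
seeker another contract in `D` at a later wait time, contradicting early filling. -/
lemma pick_mem_of_isPriorityPrefix (hD : ChoiceAxioms s q r π X' D) (hacc : acc ⊆ D)
    (hpre : IsPriorityPrefix r π X' acc) (hq : (acc.sum fun x => s x.1) < q)
    (h : (eligible r X' acc).Nonempty) : pick π _ h ∈ D := by
  set p := pick π _ h
  obtain ⟨hpX, hpcap, hpagent⟩ := mem_filter.mp (pick_mem π _ h)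
  have hbefore := hD.filter_rank_lt_pick hacc hpre h
  have hbefore_wait : D.filter (fun y => y.2 = p.2 ∧ π y.1 < π p.1) =
      acc.filter fun y => y.2 = p.2 := by
    rw [← hbefore, filter_filter]
    exact filter_congr fun _ _ => and_comm
  by_contra hpD
  obtain ⟨x, hxD, hxp⟩ := (hD.respects_priorities p.1 ⟨p, hpX, rfl⟩).mpr
    ⟨hbefore ▸ hq, p.2, hpX, by rwa [hbefore_wait]⟩
  have hx_ne : x ≠ p := fun hx => hpD (hx ▸ hxD)
  have hx_elig := hD.mem_eligible hacc hxD fun hx => hpagent x hx hxp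
  have hwait : p.2 < x.2 := (wait_pick_le h hx_elig hxp).lt_of_ne
    fun hw => hx_ne (Prod.ext hxp hw.symm)
  have hfull := hD.early_filling x hxD p hpX hxp.symm hwait hpD
  rw [hxp, hbefore_wait] at hfull
  exact hfull hpcap

lemma run_eq (hD : ChoiceAxioms s q r π X' D) (hπ : Function.Injective π) :
    ∀ n (acc : Finset Ctr), acc ⊆ D → IsPriorityPrefix r π X' acc →
      D.card ≤ acc.card + n → run s q r π true X' n acc = D := by
  intro n
  induction n with
  | zero => exact fun acc hacc _ hcard => eq_of_subset_of_card_le hacc hcard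
  | succ n ih =>
    intro acc hacc hpre hcard
    rw [run_true_succ]
    split_ifs with hq h
    · exact hD.eq_of_quota_le hacc hpre hq
    · have hp_acc : pick π _ h ∉ acc := fun hp =>
        (mem_filter.mp (pick_mem π _ h)).2.2 _ hp rfl
      have hpD := hD.pick_mem_of_isPriorityPrefix hacc hpre (not_le.mp hq) h
      refine ih _ (insert_subset hpD hacc) (hpre.insert_pick hπ h) ?_
      rw [card_insert_of_notMem hp_acc]
      omega
    · exact hD.eq_of_not_nonempty_eligible hacc h

end ChoiceAxioms

/-- Theorem 1, uniqueness: any choice rule satisfying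
feasibility, early filling, and respect of member state priorities coincides
with `Ĉ_m` on every input. -/
theorem chat_unique (s : ℕ → ℕ) (q : ℕ) (r π : ℕ → ℕ)
    (hπ : Function.Injective π) (C : Finset Ctr → Finset Ctr)
    (hsub : ∀ X' : Finset Ctr, C X' ⊆ X')
    (hfeas : ∀ X' : Finset Ctr,
      (∀ a : ℕ, ((C X').filter fun x => x.1 = a).card ≤ 1) ∧
      (∀ w : ℕ, ((C X').filter fun x => x.2 = w).card ≤ r w))
    (hearly : ∀ X' : Finset Ctr, ∀ x ∈ C X', ∀ x' ∈ X',
      x'.1 = x.1 → x'.2 < x.2 → x' ∉ C X' →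
      ¬ ((C X').filter fun y => y.2 = x'.2 ∧ π y.1 < π x.1).card < r x'.2)
    (hresp : ∀ (X' : Finset Ctr) (a : ℕ), (∃ x ∈ X', x.1 = a) →
      ((∃ x ∈ C X', x.1 = a) ↔
        (((C X').filter fun y => π y.1 < π a).sum fun y => s y.1) < q ∧
        ∃ w : ℕ, (a, w) ∈ X' ∧
          ((C X').filter fun y => y.2 = w ∧ π y.1 < π a).card < r w)) :
    ∀ X' : Finset Ctr, C X' = Chat s q r π X' := by
  intro X'
  have hinj : Set.InjOn Prod.fst (C X' : Set Ctr) := fun x hx y hy hxy =>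
    card_le_one.mp ((hfeas X').1 x.1) x (mem_filter.mpr ⟨hx, rfl⟩) y
      (mem_filter.mpr ⟨hy, hxy.symm⟩)
  have hD : ChoiceAxioms s q r π X' (C X') :=
    ⟨hsub X', hinj, (hfeas X').2, hearly X', hresp X'⟩
  refine (hD.run_eq hπ _ ∅ (empty_subset _) (isPriorityPrefix_empty r π X') ?_).symm
  simpa using (card_le_card (hsub X')).trans (Nat.le_succ _)
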